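/- arXiv:1708.06573 — 2 statements merged into one kernel-verified Lean document; each statement's English description precedes it below -/
import Mathlib

section
/- For every m₁ with |m₁| ≤ 1 and every v ∈ ℝ³ with v ≠ 0, one has ∫_{ℝ³} (v · v_*) Ψ_{0,1,m₁}(v_*) dv_* = √(4π/3) · |v| · Y_1^{m₁}(v/|v|) (for v = 0 both sides vanish). -/
open MeasureTheory Real
open scoped RealInnerProductSpace BigOperators

noncomputable section

/-- The velocity space `ℝ³`. -/
abbrev V3 : Type := EuclideanSpace ℝ (Fin 3)

/-- The absolute Maxwellian `μ(v) = (2π)^{-3/2} e^{-|v|²/2}`. -/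
def gaussM (v : V3) : ℝ := (2 * π) ^ (-(3:ℝ)/2) * Real.exp (-‖v‖^2 / 2)

/-- Legendre polynomial via Rodrigues' formula. -/
def legendreP (l : ℕ) (x : ℝ) : ℝ :=
  (1 / (2^l * (Nat.factorial l : ℝ))) * iteratedDeriv l (fun y : ℝ => (y^2 - 1)^l) x

/-- Associated Legendre function `P_l^k` for `k ≥ 0`. -/
def assocLegendreP (l k : ℕ) (x : ℝ) : ℝ :=
  (Real.sqrt (1 - x^2))^k * iteratedDeriv k (legendreP l) x

/-- Normalisation factor `N_{l,m}`. -/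
def sphNormC (l : ℕ) (m : ℤ) : ℝ :=
  Real.sqrt (((2*(l:ℝ)+1) * (Nat.factorial (l - m.natAbs) : ℝ)) /
    (4 * π * (Nat.factorial (l + m.natAbs) : ℝ)))

/-- Spherical harmonic `Y_l^m` evaluated at a (unit) vector `ω`, with the convention
that it vanishes when `l < 0` or `|m| > l`.  For `ω = (cos θ, sin θ cos φ, sin θ sin φ)`
one has `ω 0 = cos θ` and `arg (ω 1 + i ω 2) = φ (mod 2π)`. -/
def sphY (l m : ℤ) (ω : V3) : ℂ :=
  if 0 ≤ l ∧ (m.natAbs : ℤ) ≤ l then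
    ((sphNormC l.toNat m * assocLegendreP l.toNat m.natAbs (ω 0) : ℝ) : ℂ) *
      Complex.exp (Complex.I * (m : ℂ) *
        ((Complex.arg ((ω 1 : ℂ) + Complex.I * (ω 2 : ℂ)) : ℝ) : ℂ))
  else 0

/-- The point `(cos θ, sin θ cos φ, sin θ sin φ)` of the unit sphere `S² ⊂ ℝ³`. -/
def sphPt (θ φ : ℝ) : V3 :=
  (WithLp.equiv 2 (Fin 3 → ℝ)).symm ![Real.cos θ, Real.sin θ * Real.cos φ, Real.sin θ * Real.sin φ]

/-- Integral over the unit sphere `S²`, in spherical coordinates. -/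
def sphereIntegral (F : V3 → ℂ) : ℂ :=
  ∫ θ in (0:ℝ)..π, ∫ φ in (0:ℝ)..(2*π), F (sphPt θ φ) * ((Real.sin θ : ℝ) : ℂ)

/-- Gaunt-type coefficient `C^{m₂,m}_{l,l'} = ∫_{S²} Y_2^{m₂} Y_l^m Y_{l'}^{-m₂-m} dω`. -/
def gauntC (m2 m l l' : ℤ) : ℂ :=
  sphereIntegral (fun ω => sphY 2 m2 ω * sphY l m ω * sphY l' (-(m2+m)) ω)

/-- Gaunt-type coefficient `C̃^{m₁,m}_{l,l'} = ∫_{S²} Y_1^{m₁} Y_l^m Y_{l'}^{-m₁-m} dω`. -/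
def gauntCt (m1 m l l' : ℤ) : ℂ :=
  sphereIntegral (fun ω => sphY 1 m1 ω * sphY l m ω * sphY l' (-(m1+m)) ω)

/-- Coefficient `A^-_{n,l,m,m₁}`. -/
def coefAm (n l m m1 : ℤ) : ℂ :=
  ((4 * Real.sqrt (π/3) * ((l:ℝ) - 1) * Real.sqrt (2*((n:ℝ)+1)) : ℝ) : ℂ) *
    gauntCt m1 m l (l-1)

/-- Coefficient `A^+_{n,l,m,m₁}`. -/
def coefAp (n l m m1 : ℤ) : ℂ :=
  ((4 * Real.sqrt (π/3) * ((l:ℝ) + 2) * Real.sqrt (2*(n:ℝ)+2*(l:ℝ)+3) : ℝ) : ℂ) *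
    gauntCt m1 m l (l+1)

/-- Coefficient `A^1_{n,l,m,m₂}`. -/
def coefA1 (n l m m2 : ℤ) : ℂ :=
  (((-(4 * Real.sqrt (π/15))) * Real.sqrt (4*((n:ℝ)+2)*((n:ℝ)+1)) : ℝ) : ℂ) *
    gauntC m2 m l (l-2)

/-- Coefficient `A^2_{n,l,m,m₂}`. -/
def coefA2 (n l m m2 : ℤ) : ℂ :=
  ((4 * Real.sqrt (π/15) * Real.sqrt (2*((n:ℝ)+1)*(2*(n:ℝ)+2*(l:ℝ)+3)) : ℝ) : ℂ) *
    gauntC m2 m l l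

/-- Coefficient `A^3_{n,l,m,m₂}`. -/
def coefA3 (n l m m2 : ℤ) : ℂ :=
  (((-(4 * Real.sqrt (π/15))) * Real.sqrt ((2*(n:ℝ)+2*(l:ℝ)+5)*(2*(n:ℝ)+2*(l:ℝ)+3)) : ℝ) : ℂ) *
    gauntC m2 m l (l+2)

/-- Laguerre polynomial `L_n^{(β)}`. -/
def laguerreL (n : ℕ) (β : ℝ) (x : ℝ) : ℝ :=
  ∑ r ∈ Finset.range (n+1),
    (-1)^(n-r) * Real.Gamma (β + n + 1) /
      ((Nat.factorial r : ℝ) * (Nat.factorial (n-r) : ℝ) * Real.Gamma (β + (n-r : ℕ) + 1)) *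
      x^(n-r)

/-- Eigenfunction `φ_{n,l,m}` of the harmonic oscillator / Laplace–Beltrami operator,
with the convention that it vanishes if `n < 0`, `l < 0` or `|m| > l`. -/
def phiE (n l m : ℤ) (v : V3) : ℂ :=
  if 0 ≤ n ∧ 0 ≤ l ∧ (m.natAbs : ℤ) ≤ l then
    ((Real.sqrt ((Nat.factorial n.toNat : ℝ) /
        (Real.sqrt 2 * Real.Gamma ((n.toNat : ℝ) + (l.toNat : ℝ) + 3/2))) *
       (‖v‖ / Real.sqrt 2) ^ l.toNat * Real.exp (-‖v‖^2/4) *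
       laguerreL n.toNat ((l.toNat : ℝ) + 1/2) (‖v‖^2/2) : ℝ) : ℂ) *
      sphY l m (‖v‖⁻¹ • v)
  else 0

/-- Partial derivative `∂_j` of a complex valued function on `ℝ³`. -/
def pd (j : Fin 3) (f : V3 → ℂ) (v : V3) : ℂ :=
  fderiv ℝ f v (EuclideanSpace.single j 1)

/-- The matrix `a(u) = |u|² I − u ⊗ u`. -/
def aMat (u : V3) (k j : Fin 3) : ℝ :=
  (if k = j then ‖u‖^2 else 0) - u k * u j

/-- Landau collision operator with Maxwellian molecules. -/
def QL (g f : V3 → ℂ) (v : V3) : ℂ :=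
  ∑ k : Fin 3, pd k (fun w => ∑ j : Fin 3,
      ∫ vs : V3, ((aMat (w - vs) k j : ℝ) : ℂ) * (g vs * pd j f w - pd j g vs * f w)) v

/-- The nonlinear operator `𝐋(f,g) = μ^{-1/2} Q_L(√μ f, √μ g)`. -/
def LandauL (f g : V3 → ℂ) (v : V3) : ℂ :=
  ((Real.sqrt (gaussM v) : ℝ) : ℂ)⁻¹ *
    QL (fun w => ((Real.sqrt (gaussM w) : ℝ) : ℂ) * f w)
       (fun w => ((Real.sqrt (gaussM w) : ℝ) : ℂ) * g w) v

/-- The linearized Landau operator `𝓛(g) = −μ^{-1/2}(Q_L(√μ g, μ) + Q_L(μ, √μ g))`. -/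
def calL (g : V3 → ℂ) (v : V3) : ℂ :=
  -(((Real.sqrt (gaussM v) : ℝ) : ℂ)⁻¹ *
    (QL (fun w => ((Real.sqrt (gaussM w) : ℝ) : ℂ) * g w) (fun w => ((gaussM w : ℝ) : ℂ)) v
     + QL (fun w => ((gaussM w : ℝ) : ℂ)) (fun w => ((Real.sqrt (gaussM w) : ℝ) : ℂ) * g w) v))

/-- `L²(ℝ³)` hermitian pairing `⟨u,w⟩ = ∫ u conj(w)`. -/
def pairL2 (u w : V3 → ℂ) : ℂ := ∫ v : V3, u v * (starRingEnd ℂ) (w v)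

/-! On the unit sphere, `Y_1^0 = √(3/4π) u₀` and `Y_1^{±1} = √(3/8π) (u₁ ± i u₂)`, so the
solid harmonic `w ↦ |w| Y_1^m(w/|w|)` is an `ℝ`-linear map `L : ℝ³ → ℂ`, and
`Ψ_{0,1,m}(w) = √(4π/3) (2π)^{-3/2} e^{-|w|²/2} L(w)`. The second moments of the Gaussian,
`∫ w_i w_j e^{-|w|²/2} dw = (2π)^{3/2} δ_ij`, give
`∫ (v · w) L(w) e^{-|w|²/2} dw = (2π)^{3/2} L(v)` for every linear `L`. -/

open ProbabilityTheory

lemma integral_mul_exp_neg_sq_div_two_eq_integral_gaussianReal (f : ℝ → ℝ) :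
    ∫ x, f x * exp (-x ^ 2 / 2) = √(2 * π) * ∫ x, f x ∂gaussianReal 0 1 := by
  rw [integral_gaussianReal_eq_integral_smul one_ne_zero, ← integral_const_mul]
  congr 1 with x
  simp [gaussianPDFReal]
  field_simp

lemma integral_exp_neg_sq_div_two : ∫ x : ℝ, exp (-x ^ 2 / 2) = √(2 * π) := by
  simpa using integral_mul_exp_neg_sq_div_two_eq_integral_gaussianReal fun _ => 1

lemma integral_id_mul_exp_neg_sq_div_two : ∫ x : ℝ, x * exp (-x ^ 2 / 2) = 0 := by
  simp [integral_mul_exp_neg_sq_div_two_eq_integral_gaussianReal fun x => x,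
    integral_id_gaussianReal]

lemma integral_sq_mul_exp_neg_sq_div_two : ∫ x : ℝ, x ^ 2 * exp (-x ^ 2 / 2) = √(2 * π) := by
  have hvar := variance_fun_id_gaussianReal (μ := 0) (v := 1)
  rw [variance_eq_integral measurable_id'.aemeasurable] at hvar
  simp only [integral_id_gaussianReal, sub_zero, NNReal.coe_one] at hvar
  simp [integral_mul_exp_neg_sq_div_two_eq_integral_gaussianReal fun x => x ^ 2, hvar]

lemma integrable_pow_mul_exp_neg_sq_div_two (p : ℕ) :
    Integrable fun x : ℝ => x ^ p * exp (-x ^ 2 / 2) := by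
  have h := integrable_rpow_mul_exp_neg_mul_sq (b := 1 / 2) (by norm_num) (s := p)
    (by linarith [(Nat.cast_nonneg p : (0 : ℝ) ≤ p)])
  simp_rw [Real.rpow_natCast] at h
  convert h using 4
  ring

section GaussianMoments

variable {ι : Type*} [Fintype ι]

lemma mul_mul_exp_neg_norm_sq_div_two_eq_prod [DecidableEq ι] (i j : ι)
    (w : EuclideanSpace ℝ ι) :
    w i * w j * exp (-‖w‖ ^ 2 / 2) =
      ∏ k, w k ^ ((if k = i then 1 else 0) + (if k = j then 1 else 0)) * exp (-w k ^ 2 / 2) := by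
  simp only [Finset.prod_mul_distrib, pow_add, pow_ite, pow_one, pow_zero, Finset.prod_ite_eq',
    Finset.mem_univ, if_true, ← Real.exp_sum, EuclideanSpace.real_norm_sq_eq, Finset.sum_div,
    Finset.sum_neg_distrib, neg_div]

lemma integrable_mul_mul_exp_neg_norm_sq_div_two (i j : ι) :
    Integrable fun w : EuclideanSpace ℝ ι => w i * w j * exp (-‖w‖ ^ 2 / 2) := by
  classical
  simp_rw [mul_mul_exp_neg_norm_sq_div_two_eq_prod i j]
  rw [← (PiLp.volume_preserving_toLp ι).integrable_comp_emb
    (MeasurableEquiv.toLp 2 (ι → ℝ)).measurableEmbedding]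
  exact Integrable.fintype_prod (f := fun k t =>
    t ^ ((if k = i then 1 else 0) + (if k = j then 1 else 0)) * exp (-t ^ 2 / 2))
    fun k => integrable_pow_mul_exp_neg_sq_div_two _

lemma integral_mul_mul_exp_neg_norm_sq_div_two [DecidableEq ι] (i j : ι) :
    ∫ w : EuclideanSpace ℝ ι, w i * w j * exp (-‖w‖ ^ 2 / 2) =
      if i = j then √(2 * π) ^ Fintype.card ι else 0 := by
  simp_rw [mul_mul_exp_neg_norm_sq_div_two_eq_prod i j]
  rw [← (PiLp.volume_preserving_toLp ι).integral_comp
      (MeasurableEquiv.toLp 2 (ι → ℝ)).measurableEmbedding,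
    integral_fintype_prod_volume_eq_prod (fun k t =>
      t ^ ((if k = i then 1 else 0) + (if k = j then 1 else 0)) * exp (-t ^ 2 / 2))]
  split_ifs with hij
  · subst hij
    rw [← Finset.card_univ, ← Finset.prod_const]
    refine Finset.prod_congr rfl fun k _ => ?_
    by_cases hk : k = i
    · simp [hk, integral_sq_mul_exp_neg_sq_div_two]
    · simp [hk, integral_exp_neg_sq_div_two]
  · exact Finset.prod_eq_zero (Finset.mem_univ i)
      (by simp [hij, integral_id_mul_exp_neg_sq_div_two])

lemma inner_mul_mul_exp_neg_norm_sq_div_two (x w : EuclideanSpace ℝ ι) (j : ι) :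
    ⟪x, w⟫ * w j * exp (-‖w‖ ^ 2 / 2) =
      ∑ i, x i * (w i * w j * exp (-‖w‖ ^ 2 / 2)) := by
  simp only [PiLp.inner_apply, RCLike.inner_apply, conj_trivial, Finset.sum_mul]
  exact Finset.sum_congr rfl fun i _ => by ring

lemma integrable_inner_mul_mul_exp_neg_norm_sq_div_two (x : EuclideanSpace ℝ ι) (j : ι) :
    Integrable fun w : EuclideanSpace ℝ ι => ⟪x, w⟫ * w j * exp (-‖w‖ ^ 2 / 2) := by
  simp_rw [inner_mul_mul_exp_neg_norm_sq_div_two x _ j]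
  exact integrable_finsetSum _ fun i _ =>
    (integrable_mul_mul_exp_neg_norm_sq_div_two i j).const_mul (x i)

lemma integral_inner_mul_mul_exp_neg_norm_sq_div_two (x : EuclideanSpace ℝ ι) (j : ι) :
    ∫ w : EuclideanSpace ℝ ι, ⟪x, w⟫ * w j * exp (-‖w‖ ^ 2 / 2) =
      √(2 * π) ^ Fintype.card ι * x j := by
  classical
  simp_rw [inner_mul_mul_exp_neg_norm_sq_div_two x _ j]
  rw [integral_finsetSum _ fun i _ =>
    (integrable_mul_mul_exp_neg_norm_sq_div_two i j).const_mul (x i)]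
  simp [integral_const_mul, integral_mul_mul_exp_neg_norm_sq_div_two, mul_comm]

theorem integral_inner_smul_exp_neg_norm_sq_div_two {F : Type*} [NormedAddCommGroup F]
    [NormedSpace ℝ F] [CompleteSpace F] (x : EuclideanSpace ℝ ι)
    (L : EuclideanSpace ℝ ι →ₗ[ℝ] F) :
    ∫ w : EuclideanSpace ℝ ι, (⟪x, w⟫ * exp (-‖w‖ ^ 2 / 2)) • L w =
      √(2 * π) ^ Fintype.card ι • L x := by
  set b := EuclideanSpace.basisFun ι ℝ
  have hL (w : EuclideanSpace ℝ ι) : L w = ∑ j, w j • L (b j) := by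
    conv_lhs => rw [← b.sum_repr w]
    simp only [map_sum, map_smul, b, EuclideanSpace.basisFun_repr]
  have hsum (w : EuclideanSpace ℝ ι) : (⟪x, w⟫ * exp (-‖w‖ ^ 2 / 2)) • L w =
      ∑ j, (⟪x, w⟫ * w j * exp (-‖w‖ ^ 2 / 2)) • L (b j) := by
    rw [hL w, Finset.smul_sum]
    exact Finset.sum_congr rfl fun j _ => by rw [smul_smul]; ring_nf
  rw [integral_congr_ae (ae_of_all _ hsum), integral_finsetSum _ fun j _ =>
    (integrable_inner_mul_mul_exp_neg_norm_sq_div_two x j).smul_const _]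
  simp_rw [integral_smul_const, integral_inner_mul_mul_exp_neg_norm_sq_div_two, mul_smul,
    ← Finset.smul_sum, ← hL]

end GaussianMoments

open Complex in
lemma norm_mul_exp_I_mul_arg_of_natAbs_eq_one {m : ℤ} (hm : m.natAbs = 1) (z : ℂ) :
    ‖z‖ * cexp (I * m * arg z) = z.re + m * z.im * I := by
  have hz := norm_mul_exp_arg_mul_I z
  rcases Int.natAbs_eq_iff.mp hm with rfl | rfl
  · simp [mul_comm I, re_add_im, hz]
  · have hconj := congrArg (starRingEnd ℂ) hz
    rw [map_mul, conj_ofReal, ← exp_conj, map_mul, conj_ofReal, conj_I] at hconj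
    simp only [Nat.cast_one, Int.cast_neg, Int.cast_one]
    rw [show I * -1 * (arg z : ℂ) = arg z * -I by ring, hconj]
    apply Complex.ext <;> simp

lemma legendreP_one : legendreP 1 = id := by
  funext x
  simp [legendreP]

lemma assocLegendreP_one_zero (x : ℝ) : assocLegendreP 1 0 x = x := by
  simp [assocLegendreP, legendreP_one]

lemma assocLegendreP_one_one (x : ℝ) : assocLegendreP 1 1 x = √(1 - x ^ 2) := by
  simp [assocLegendreP, legendreP_one]

lemma sphNormC_one_zero : sphNormC 1 0 = √(3 / (4 * π)) := by
  norm_num [sphNormC]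

lemma sphNormC_one_of_natAbs_eq_one {m : ℤ} (hm : m.natAbs = 1) :
    sphNormC 1 m = √(3 / (8 * π)) := by
  rw [sphNormC, hm]
  congr 1
  norm_num [Nat.factorial]
  ring

lemma sphY_one_zero (u : V3) : sphY 1 0 u = √(3 / (4 * π)) * u 0 := by
  simp [sphY, sphNormC_one_zero, assocLegendreP_one_zero]

lemma sphY_one_of_natAbs_eq_one {m : ℤ} (hm : m.natAbs = 1) {u : V3} (hu : ‖u‖ = 1) :
    sphY 1 m u = √(3 / (8 * π)) * (u 1 + m * u 2 * Complex.I) := by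
  set z : ℂ := u 1 + Complex.I * u 2
  have hnorm : √(1 - u 0 ^ 2) = ‖z‖ := by
    have h := EuclideanSpace.real_norm_sq_eq u
    rw [hu, Fin.sum_univ_three] at h
    rw [Complex.norm_def, Complex.normSq_apply]
    congr 1
    simp [z]
    linarith
  rw [sphY, if_pos (by omega)]
  simp only [Int.toNat_one, hm, sphNormC_one_of_natAbs_eq_one hm, assocLegendreP_one_one, hnorm]
  push_cast
  rw [mul_assoc, norm_mul_exp_I_mul_arg_of_natAbs_eq_one hm]
  simp [z]

lemma sphY_one_of_one_lt_natAbs {m : ℤ} (hm : 1 < m.natAbs) (u : V3) : sphY 1 m u = 0 := by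
  rw [sphY, if_neg (by omega)]

lemma exists_sphY_one_eq_sum (m : ℤ) :
    ∃ c : Fin 3 → ℂ, ∀ u : V3, ‖u‖ = 1 → sphY 1 m u = ∑ j, u j • c j := by
  rcases lt_trichotomy m.natAbs 1 with hm | hm | hm
  · obtain rfl : m = 0 := by omega
    refine ⟨![√(3 / (4 * π)), 0, 0], fun u _ => ?_⟩
    simp [sphY_one_zero, Fin.sum_univ_three, Complex.real_smul, mul_comm]
  · refine ⟨![0, √(3 / (8 * π)), √(3 / (8 * π)) * m * Complex.I], fun u hu => ?_⟩
    simp [sphY_one_of_natAbs_eq_one hm hu, Fin.sum_univ_three, Complex.real_smul]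
    ring
  · exact ⟨0, fun u _ => by simp [sphY_one_of_one_lt_natAbs hm]⟩

lemma exists_linearMap_norm_mul_sphY_one (m : ℤ) :
    ∃ L : V3 →ₗ[ℝ] ℂ, ∀ w : V3, ‖w‖ * sphY 1 m (‖w‖⁻¹ • w) = L w := by
  obtain ⟨c, hc⟩ := exists_sphY_one_eq_sum m
  refine ⟨(EuclideanSpace.basisFun (Fin 3) ℝ).toBasis.constr ℝ c, fun w => ?_⟩
  rcases eq_or_ne w 0 with rfl | hw
  · simp
  · have hu : ‖‖w‖⁻¹ • w‖ = 1 := norm_smul_inv_norm hw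
    have hw' : (‖w‖ : ℂ) ≠ 0 := by simpa using hw
    rw [hc _ hu, Module.Basis.constr_apply_fintype, Finset.mul_sum]
    refine Finset.sum_congr rfl fun j _ => ?_
    simp only [PiLp.smul_apply, smul_eq_mul, Complex.real_smul, Module.Basis.equivFun_apply,
      OrthonormalBasis.coe_toBasis_repr_apply, EuclideanSpace.basisFun_repr]
    push_cast
    field_simp

lemma Real.Gamma_five_halves : Real.Gamma (5 / 2) = 3 * √π / 4 := by
  have h := Real.Gamma_nat_add_one_add_half 1
  norm_num [Nat.doubleFactorial] at h
  exact h

lemma laguerreL_zero (β x : ℝ) (hβ : Real.Gamma (β + 1) ≠ 0) : laguerreL 0 β x = 1 := by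
  simp [laguerreL, hβ]

lemma phiE_zero_one (m : ℤ) (w : V3) :
    phiE 0 1 m w =
      ((√(1 / (√2 * Real.Gamma (5 / 2))) / √2 * ‖w‖ * exp (-‖w‖ ^ 2 / 4) : ℝ) : ℂ)
        * sphY 1 m (‖w‖⁻¹ • w) := by
  rw [phiE]
  split_ifs with hm
  · have hΓ : Real.Gamma ((1 : ℕ) + 1 / 2 + 1) ≠ 0 := by
      rw [show ((1 : ℕ) : ℝ) + 1 / 2 + 1 = 5 / 2 by norm_num, Real.Gamma_five_halves]
      positivity
    simp only [Int.toNat_zero, Int.toNat_one, laguerreL_zero _ _ hΓ]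
    congr 2
    norm_num
    ring
  · rw [sphY, if_neg (by omega), mul_zero]

lemma sqrt_gaussM (w : V3) :
    √(gaussM w) = √((2 * π) ^ (-(3 : ℝ) / 2)) * exp (-‖w‖ ^ 2 / 4) := by
  rw [gaussM, Real.sqrt_mul (by positivity), ← Real.exp_half]
  ring_nf

lemma sqrt_gaussM_mul_phiE_zero_one (m : ℤ) (w : V3) :
    ((√(gaussM w) : ℝ) : ℂ) * phiE 0 1 m w =
      ((√(4 * π / 3) / √(2 * π) ^ 3 * exp (-‖w‖ ^ 2 / 2) : ℝ) : ℂ) *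
        (‖w‖ * sphY 1 m (‖w‖⁻¹ • w)) := by
  have hconst : √((2 * π) ^ (-(3 : ℝ) / 2)) * (√(1 / (√2 * Real.Gamma (5 / 2))) / √2) =
      √(4 * π / 3) / √(2 * π) ^ 3 := by
    have hπ : 0 < π := Real.pi_pos
    have h32 : (2 * π) ^ (-(3 : ℝ) / 2) = ((√2 * √π) ^ 3)⁻¹ := by
      rw [← Real.sqrt_mul zero_le_two, Real.sqrt_eq_rpow, ← Real.rpow_natCast,
        ← Real.rpow_mul (by positivity), ← Real.rpow_neg (by positivity)]
      norm_num
    have h2 : √2 ^ 2 = 2 := Real.sq_sqrt zero_le_two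
    have hπ2 : √π ^ 2 = π := Real.sq_sqrt hπ.le
    -- both sides are positive, with square `1 / (6 π²)`
    rw [← pow_left_inj₀ (by positivity) (by positivity) two_ne_zero, mul_pow, div_pow, div_pow,
      Real.sq_sqrt (by positivity), Real.sq_sqrt (by rw [Real.Gamma_five_halves]; positivity),
      Real.sq_sqrt (by positivity), h32, Real.Gamma_five_halves, ← pow_mul,
      Real.sqrt_mul zero_le_two]
    field_simp
    rw [Real.sq_sqrt (by positivity)]
    linear_combination (4 * √2 ^ 4 * √π ^ 6) * h2 + (8 * √2 ^ 4 * √π ^ 4) * hπ2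
  rw [sqrt_gaussM, phiE_zero_one, ← hconst,
    show -‖w‖ ^ 2 / 2 = -‖w‖ ^ 2 / 4 + -‖w‖ ^ 2 / 4 by ring, Real.exp_add]
  push_cast
  ring

theorem integral_inner_Psi01_general (m1 : ℤ) (v : V3) :
    (∫ vs : V3, ((⟪v, vs⟫ : ℝ) : ℂ) * (((Real.sqrt (gaussM vs) : ℝ) : ℂ) * phiE 0 1 m1 vs))
      = ((Real.sqrt (4*π/3) * ‖v‖ : ℝ) : ℂ) * sphY 1 m1 (‖v‖⁻¹ • v) := by
  obtain ⟨L, hL⟩ := exists_linearMap_norm_mul_sphY_one m1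
  have hΨ (w : V3) : ((⟪v, w⟫ : ℝ) : ℂ) * (((√(gaussM w) : ℝ) : ℂ) * phiE 0 1 m1 w) =
      (√(4 * π / 3) / √(2 * π) ^ 3) • ((⟪v, w⟫ * exp (-‖w‖ ^ 2 / 2)) • L w) := by
    rw [sqrt_gaussM_mul_phiE_zero_one, hL, smul_smul, Complex.real_smul]
    push_cast
    ring
  simp_rw [hΨ]
  rw [integral_smul, integral_inner_smul_exp_neg_norm_sq_div_two, smul_smul, Fintype.card_fin,
    div_mul_cancel₀ _ (by positivity), ← hL v, Complex.real_smul]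
  push_cast
  ring

/-- `∫ (v·v_*) Ψ_{0,1,m₁}(v_*) dv_* = √(4π/3) |v| Y_1^{m₁}(v/|v|)` for `v ≠ 0`,
where `Ψ_{n,l,m} = √μ φ_{n,l,m}`. -/
theorem integral_inner_Psi01 (m1 : ℤ) (hm1 : m1.natAbs ≤ 1) (v : V3) (hv : v ≠ 0) :
    (∫ vs : V3, ((⟪v, vs⟫ : ℝ) : ℂ) * (((Real.sqrt (gaussM vs) : ℝ) : ℂ) * phiE 0 1 m1 vs))
      = ((Real.sqrt (4*π/3) * ‖v‖ : ℝ) : ℂ) * sphY 1 m1 (‖v‖⁻¹ • v) :=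
  integral_inner_Psi01_general m1 v

end
end

section
/- Suppose the family (g_{n,l,m}) of continuously differentiable functions [0,∞) → ℂ solves the infinite ODE system (ODE-0), and the initial values satisfy g_{0,0,0}(0) = g_{0,1,-1}(0) = g_{0,1,0}(0) = g_{0,1,1}(0) = g_{1,0,0}(0) = 0. Then for all t ≥ 0: g_{0,0,0}(t) = 0, g_{0,1,m}(t) = 0 for all |m| ≤ 1, g_{1,0,0}(t) = 0, and g_{0,2,m}(t) = e^{-12t} g_{0,2,m}(0) for all |m| ≤ 2. -/
open MeasureTheory Real
open scoped RealInnerProductSpace BigOperators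

noncomputable section

/-- Eigenvalues of the linearized Landau operator: `λ_{0,0} = λ_{0,1} = λ_{1,0} = 0`,
`λ_{0,2} = 12`, and `λ_{n,l} = 2(2n+l) + l(l+1)` for `2n+l > 2`. -/
def lamNL (n l : ℤ) : ℝ :=
  if n = 0 ∧ l = 2 then 12 else if 2*n + l ≤ 2 then 0 else ((2*(2*n+l) + l*(l+1) : ℤ) : ℝ)

/-- Right-hand side `(𝐋(g,g), φ_{n,l,m})` of the infinite ODE system (ODE-0). -/
def odeRHS0 (g : ℤ → ℤ → ℤ → ℝ → ℂ) (n l m : ℤ) (t : ℝ) : ℂ :=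
  -(((2*(2*n+l) + l*(l+1) : ℤ) : ℂ)) * g 0 0 0 t * g n l m t
  + (∑ m1 ∈ Finset.Icc (-1:ℤ) 1,
      if ((m - m1).natAbs : ℤ) ≤ l + 1 ∧ 1 ≤ n then
        coefAm (n-1) (l+1) (m-m1) m1 * g 0 1 m1 t * g (n-1) (l+1) (m-m1) t else 0)
  + (∑ m1 ∈ Finset.Icc (-1:ℤ) 1,
      if ((m - m1).natAbs : ℤ) ≤ l - 1 then
        coefAp n (l-1) (m-m1) m1 * g 0 1 m1 t * g n (l-1) (m-m1) t else 0)
  + ((4 * Real.sqrt (3*(n:ℝ)*(2*(n:ℝ)+2*(l:ℝ)+1)) / 3 : ℝ) : ℂ) * g 1 0 0 t * g (n-1) l m t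
  + (∑ m2 ∈ Finset.Icc (-2:ℤ) 2,
      if ((m - m2).natAbs : ℤ) ≤ l + 2 ∧ 2 ≤ n then
        coefA1 (n-2) (l+2) (m-m2) m2 * g 0 2 m2 t * g (n-2) (l+2) (m-m2) t else 0)
  + (∑ m2 ∈ Finset.Icc (-2:ℤ) 2,
      if ((m - m2).natAbs : ℤ) ≤ l ∧ 1 ≤ n then
        coefA2 (n-1) l (m-m2) m2 * g 0 2 m2 t * g (n-1) l (m-m2) t else 0)
  + (∑ m2 ∈ Finset.Icc (-2:ℤ) 2,
      if ((m - m2).natAbs : ℤ) ≤ l - 2 then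
        coefA3 n (l-2) (m-m2) m2 * g 0 2 m2 t * g n (l-2) (m-m2) t else 0)

/-! The system is triangular on the low modes. The right-hand side at `(0,0,0)` vanishes
identically; at `(0,1,m)`, `(1,0,0)` and `(0,2,m)` every term either carries a coefficient
index out of range or contains a factor `g₀₀₀` or `g₀₁ₘ₁`. Since `λ` vanishes at the first three
indices, the modes `g₀₀₀`, then `g₀₁ₘ`, then `g₁₀₀` keep their zero initial value, after which
each `g₀₂ₘ` solves `g' = -12 g`. -/

theorem eq_exp_mul_of_hasDerivAt_mul {f : ℝ → ℂ} {c : ℂ} {a b : ℝ} (hab : a ≤ b)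
    (hf : ContinuousOn f (Set.Icc a b)) (hf' : ∀ s ∈ Set.Ioo a b, HasDerivAt f (c * f s) s) :
    f b = Complex.exp (c * (b - a)) * f a := by
  set h : ℝ → ℂ := fun s => Complex.exp (-(c * s)) * f s
  have hh' : ∀ s ∈ Set.Ioo a b, HasDerivAt h 0 s := by
    intro s hs
    have he : HasDerivAt (fun s : ℝ => Complex.exp (-(c * s)))
        (Complex.exp (-(c * s)) * -(c * 1)) s :=
      ((hasDerivAt_id s).ofReal_comp.const_mul c).neg.cexp
    exact (he.fun_mul (hf' s hs)).congr_deriv (by ring)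
  have hh : ContinuousOn h (Set.Icc a b) := (by fun_prop : Continuous _).continuousOn.mul hf
  have hconst : h b = h a := by
    simpa [sub_eq_zero, eq_comm] using
      intervalIntegral.integral_eq_sub_of_hasDerivAt_of_le hab hh hh' (by simp)
  calc f b = Complex.exp (c * b) * h b := by
        simp only [h, ← mul_assoc, ← Complex.exp_add, add_neg_cancel, Complex.exp_zero, one_mul]
    _ = Complex.exp (c * (b - a)) * f a := by
        rw [hconst, ← mul_assoc, ← Complex.exp_add]
        congr 2
        ring

theorem Int.Icc_neg_one_one : Finset.Icc (-1 : ℤ) 1 = {-1, 0, 1} := by decide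

section RightHandSide

variable (g : ℤ → ℤ → ℤ → ℝ → ℂ) (t : ℝ)

theorem odeRHS0_zero_zero_zero : odeRHS0 g 0 0 0 t = 0 := by
  simp (disch := omega) only [odeRHS0, if_neg]
  simp

theorem odeRHS0_zero_one (h0 : g 0 0 0 t = 0) (m : ℤ) : odeRHS0 g 0 1 m t = 0 := by
  simp (disch := omega) only [odeRHS0, if_neg]
  simp +contextual [h0, sub_eq_zero]

theorem odeRHS0_one_zero_zero (h0 : g 0 0 0 t = 0)
    (h1 : ∀ m : ℤ, m.natAbs ≤ 1 → g 0 1 m t = 0) : odeRHS0 g 1 0 0 t = 0 := by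
  simp (disch := omega) only [odeRHS0, if_neg]
  simp +contextual [h0, h1, Int.Icc_neg_one_one]

theorem odeRHS0_zero_two (h0 : g 0 0 0 t = 0)
    (h1 : ∀ m : ℤ, m.natAbs ≤ 1 → g 0 1 m t = 0) (m : ℤ) : odeRHS0 g 0 2 m t = 0 := by
  simp (disch := omega) only [odeRHS0, if_neg]
  simp +contextual [h0, h1, sub_eq_zero, Int.Icc_neg_one_one]

end RightHandSide

theorem eq_exp_neg_lamNL_mul_of_odeRHS0_eq_zero {g : ℤ → ℤ → ℤ → ℝ → ℂ} {n l m : ℤ}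
    (hc : ContinuousOn (g n l m) (Set.Ici 0))
    (hd : ∀ t : ℝ, 0 < t →
      HasDerivAt (g n l m) (odeRHS0 g n l m t - ((lamNL n l : ℝ) : ℂ) * g n l m t) t)
    (hrhs : ∀ t : ℝ, 0 < t → odeRHS0 g n l m t = 0) {t : ℝ} (ht : 0 ≤ t) :
    g n l m t = ((Real.exp (-lamNL n l * t) : ℝ) : ℂ) * g n l m 0 := by
  have h := eq_exp_mul_of_hasDerivAt_mul (c := -((lamNL n l : ℝ) : ℂ)) ht
    (hc.mono Set.Icc_subset_Ici_self)
    fun s hs => by simpa [hrhs s hs.1, neg_mul] using hd s hs.1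
  simpa [Complex.ofReal_exp] using h

theorem ode0_low_modes_general (g : ℤ → ℤ → ℤ → ℝ → ℂ)
    (hcont : ∀ n l m : ℤ, 0 ≤ n → 0 ≤ l → (m.natAbs : ℤ) ≤ l →
      ContinuousOn (g n l m) (Set.Ici 0))
    (hode : ∀ n l m : ℤ, 0 ≤ n → 0 ≤ l → (m.natAbs : ℤ) ≤ l → ∀ t : ℝ, 0 < t →
      HasDerivAt (g n l m) (odeRHS0 g n l m t - ((lamNL n l : ℝ) : ℂ) * g n l m t) t)
    (hinit : g 0 0 0 0 = 0 ∧ g 0 1 (-1) 0 = 0 ∧ g 0 1 0 0 = 0 ∧ g 0 1 1 0 = 0 ∧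
      g 1 0 0 0 = 0) :
    ∀ t : ℝ, 0 ≤ t →
      g 0 0 0 t = 0 ∧ (∀ m : ℤ, m.natAbs ≤ 1 → g 0 1 m t = 0) ∧ g 1 0 0 t = 0 ∧
      (∀ m : ℤ, m.natAbs ≤ 2 → g 0 2 m t = ((Real.exp (-12*t) : ℝ) : ℂ) * g 0 2 m 0) := by
  obtain ⟨h000, h01n, h010, h011, h100⟩ := hinit
  have mode : ∀ n l m : ℤ, 0 ≤ n → 0 ≤ l → (m.natAbs : ℤ) ≤ l →
      (∀ s : ℝ, 0 < s → odeRHS0 g n l m s = 0) → ∀ {t : ℝ}, 0 ≤ t →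
        g n l m t = ((Real.exp (-lamNL n l * t) : ℝ) : ℂ) * g n l m 0 :=
    fun n l m hn hl hm =>
      eq_exp_neg_lamNL_mul_of_odeRHS0_eq_zero (hcont n l m hn hl hm) (hode n l m hn hl hm)
  have g000 : ∀ t : ℝ, 0 ≤ t → g 0 0 0 t = 0 := fun t ht => by
    simpa [lamNL, h000] using
      mode 0 0 0 le_rfl le_rfl le_rfl (fun s _ => odeRHS0_zero_zero_zero g s) ht
  have g01 : ∀ t : ℝ, 0 ≤ t → ∀ m : ℤ, m.natAbs ≤ 1 → g 0 1 m t = 0 := fun t ht m hm => by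
    have h := mode 0 1 m le_rfl zero_le_one (by omega)
      (fun s hs => odeRHS0_zero_one g s (g000 s hs.le) m) ht
    obtain rfl | rfl | rfl : m = -1 ∨ m = 0 ∨ m = 1 := by omega
    all_goals simpa [lamNL, h01n, h010, h011] using h
  have g100 : ∀ t : ℝ, 0 ≤ t → g 1 0 0 t = 0 := fun t ht => by
    simpa [lamNL, h100] using mode 1 0 0 zero_le_one le_rfl le_rfl
      (fun s hs => odeRHS0_one_zero_zero g s (g000 s hs.le) (g01 s hs.le)) ht
  intro t ht
  refine ⟨g000 t ht, g01 t ht, g100 t ht, fun m hm => ?_⟩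
  simpa [lamNL] using mode 0 2 m le_rfl zero_le_two (by omega)
    (fun s hs => odeRHS0_zero_two g s (g000 s hs.le) (g01 s hs.le) m) ht

/-- any continuously differentiable solution of the infinite system (ODE-0)
whose initial data vanish at the indices `(0,0,0)`, `(0,1,m)`, `(1,0,0)` satisfies, for
all `t ≥ 0`: `g_{0,0,0}(t) = g_{0,1,m}(t) = g_{1,0,0}(t) = 0` and
`g_{0,2,m}(t) = e^{-12t} g_{0,2,m}(0)`. -/
theorem ode0_low_modes (g : ℤ → ℤ → ℤ → ℝ → ℂ)
    (hneg : ∀ n l m : ℤ, n < 0 ∨ l < 0 → ∀ t : ℝ, g n l m t = 0)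
    (hcont : ∀ n l m : ℤ, 0 ≤ n → 0 ≤ l → (m.natAbs : ℤ) ≤ l →
      ContinuousOn (g n l m) (Set.Ici 0))
    (hode : ∀ n l m : ℤ, 0 ≤ n → 0 ≤ l → (m.natAbs : ℤ) ≤ l → ∀ t : ℝ, 0 < t →
      HasDerivAt (g n l m) (odeRHS0 g n l m t - ((lamNL n l : ℝ) : ℂ) * g n l m t) t)
    (hinit : g 0 0 0 0 = 0 ∧ g 0 1 (-1) 0 = 0 ∧ g 0 1 0 0 = 0 ∧ g 0 1 1 0 = 0 ∧
      g 1 0 0 0 = 0) :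
    ∀ t : ℝ, 0 ≤ t →
      g 0 0 0 t = 0 ∧ (∀ m : ℤ, m.natAbs ≤ 1 → g 0 1 m t = 0) ∧ g 1 0 0 t = 0 ∧
      (∀ m : ℤ, m.natAbs ≤ 2 → g 0 2 m t = ((Real.exp (-12*t) : ℝ) : ℂ) * g 0 2 m 0) :=
  ode0_low_modes_general g hcont hode hinit
end
end
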